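/- arXiv:quant-ph/0404003 — 14 statements merged into one kernel-verified Lean document; each statement's English description precedes it below -/
import Mathlib

section
/- A test set T detects all single stuck-at faults in a reversible circuit if and only if for every level i and every wire position j, there exist test vectors t, t' in T such that the value of wire j at level i under t is 0 and under t' is 1. -/
lemma key {n d : ℕ} (f : Fin (d + 1) → ((Fin n → Bool) ≃ (Fin n → Bool)))
    (i : Fin (d + 1)) (j : Fin n) (b : Bool) (t : Fin n → Bool) :
    f (Fin.last d) ((f i).symm (Function.update (f i t) j b)) ≠ f (Fin.last d) t ↔
      f i t j ≠ b := by
  constructor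
  · intro h hb
    apply h
    rw [← hb, Function.update_eq_self]
    simp
  · intro h he
    apply h
    have := (f (Fin.last d)).injective he
    have := (f i).symm.injective (by simpa using this : (f i).symm (Function.update (f i t) j b) = (f i).symm (f i t))
    have := congrFun this j
    simpa using this.symm

/-- A test set `T` detects all single stuck-at faults in a reversible
circuit iff every wire at every level is set to both `false` and `true` by `T`. -/
theorem stmt0 {n d : ℕ} (f : Fin (d + 1) → ((Fin n → Bool) ≃ (Fin n → Bool)))
    (h0 : f 0 = Equiv.refl _) (T : Set (Fin n → Bool)) :
    (∀ (i : Fin (d + 1)) (j : Fin n) (b : Bool),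
        ∃ t ∈ T,
          f (Fin.last d) ((f i).symm (Function.update (f i t) j b)) ≠ f (Fin.last d) t) ↔
    (∀ (i : Fin (d + 1)) (j : Fin n),
        (∃ t ∈ T, f i t j = false) ∧ (∃ t' ∈ T, f i t' j = true)) := by
  constructor
  · intro h i j
    constructor
    · obtain ⟨t, ht, hne⟩ := h i j true
      exact ⟨t, ht, by simpa using (key f i j true t).mp hne⟩
    · obtain ⟨t, ht, hne⟩ := h i j false
      exact ⟨t, ht, by simpa using (key f i j false t).mp hne⟩
  · intro h i j b
    cases b
    · obtain ⟨t, ht, hv⟩ := (h i j).2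
      exact ⟨t, ht, (key f i j false t).mpr (by simp [hv])⟩
    · obtain ⟨t, ht, hv⟩ := (h i j).1
      exact ⟨t, ht, (key f i j true t).mpr (by simp [hv])⟩
end

section
/- Any test set that detects all single stuck-at faults in a reversible circuit also detects all multiple stuck-at faults (i.e., any nonempty simultaneous collection of stuck-at faults at distinct wire-level sites). -/
/-
Take a fault `(i, j, b) ∈ M` at a maximal level `i`. After level `i` both the faulty circuit
for `M` and the one for the single fault `{(i, j, b)}` run fault-free, so each output equals
`f_d (f_i⁻¹ v)` for its level-`i` vector `v`; since `f_d ∘ f_i⁻¹` is injective, a fault set is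
detected by `t` exactly when its level-`i` vector differs from `f_i t`. For the single fault
that vector is `f_i t` with wire `j` set to `b`, so a test `t` detecting it has `(f_i t) j ≠ b`.
Under `M` wire `j` also carries `b` at level `i`, hence the same `t` detects `M`.
-/

/-- Overwrite, at level `i`, the wires that carry a stuck-at fault of `M`. -/
def applyFaults {n d : ℕ} (M : Finset (Fin (d + 1) × Fin n × Bool)) (i : Fin (d + 1))
    (v : Fin n → Bool) : Fin n → Bool := fun j =>
  if (i, j, true) ∈ M then true else if (i, j, false) ∈ M then false else v j

open Fin.NatCast in
/-- The wire values at level `i` of the faulty circuit (faults `M`) on input `t`. -/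
def faultyRun {n d : ℕ} (f : Fin (d + 1) → ((Fin n → Bool) ≃ (Fin n → Bool)))
    (M : Finset (Fin (d + 1) × Fin n × Bool)) (t : Fin n → Bool) : ℕ → (Fin n → Bool)
  | 0 => applyFaults M 0 t
  | i + 1 =>
      applyFaults M (↑(i + 1)) (f (↑(i + 1)) ((f (↑i)).symm (faultyRun f M t i)))

open Fin.NatCast

section applyFaults

variable {n d : ℕ} {M : Finset (Fin (d + 1) × Fin n × Bool)} {i : Fin (d + 1)}

lemma applyFaults_of_forall_not_mem (h : ∀ j b, (i, j, b) ∉ M) (v : Fin n → Bool) :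
    applyFaults M i v = v := by
  funext j
  simp [applyFaults, h j true, h j false]

lemma applyFaults_apply_of_mem (hdist : ∀ p ∈ M, ∀ q ∈ M, p.1 = q.1 → p.2.1 = q.2.1 → p = q)
    {j : Fin n} {b : Bool} (hm : (i, j, b) ∈ M) (v : Fin n → Bool) :
    applyFaults M i v j = b := by
  cases b with
  | true => simp [applyFaults, hm]
  | false =>
    have ht : (i, j, true) ∉ M := fun h => by simpa using hdist _ h _ hm rfl rfl
    simp [applyFaults, ht, hm]

lemma applyFaults_singleton (j : Fin n) (b : Bool) (v : Fin n → Bool) :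
    applyFaults {(i, j, b)} i v = Function.update v j b := by
  funext j'
  by_cases hj : j' = j
  · subst hj
    cases b <;> simp [applyFaults]
  · simp [applyFaults, hj]

end applyFaults

section faultyRun

variable {n d : ℕ} (f : Fin (d + 1) → ((Fin n → Bool) ≃ (Fin n → Bool)))
  {M : Finset (Fin (d + 1) × Fin n × Bool)} {i : Fin (d + 1)} (t : Fin n → Bool)

lemma exists_faultyRun_eq_applyFaults (k : ℕ) : ∃ w, faultyRun f M t k = applyFaults M k w := by
  cases k with
  | zero => exact ⟨t, rfl⟩
  | succ k => exact ⟨_, rfl⟩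

lemma faultyRun_apply_of_mem (hdist : ∀ p ∈ M, ∀ q ∈ M, p.1 = q.1 → p.2.1 = q.2.1 → p = q)
    {j : Fin n} {b : Bool} (hm : (i, j, b) ∈ M) : faultyRun f M t i j = b := by
  obtain ⟨w, hw⟩ := exists_faultyRun_eq_applyFaults f t i
  rw [hw, Fin.cast_val_eq_self]
  exact applyFaults_apply_of_mem hdist hm w

lemma faultyRun_eq_applyFaults_of_forall_le_level (h0 : f 0 = Equiv.refl _)
    (hM : ∀ q ∈ M, i ≤ q.1) : ∀ k ≤ i.val, faultyRun f M t k = applyFaults M k (f k t) := by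
  intro k
  induction k with
  | zero =>
    intro _
    simp [faultyRun, h0]
  | succ k ih =>
    intro hk
    have hkd : k < d + 1 := by omega
    have hfree : ∀ j b, ((k : Fin (d + 1)), j, b) ∉ M := fun j b hq => by
      have := Fin.le_def.mp (hM _ hq)
      rw [Fin.val_cast_of_lt hkd] at this
      omega
    have hrun : faultyRun f M t k = f k t := by
      rw [ih (by omega), applyFaults_of_forall_not_mem hfree]
    simp only [faultyRun, hrun, Equiv.symm_apply_apply]

lemma faultyRun_eq_of_forall_level_le (hM : ∀ q ∈ M, q.1 ≤ i) {k : ℕ} (hik : i.val ≤ k)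
    (hkd : k ≤ d) : faultyRun f M t k = f k ((f i).symm (faultyRun f M t i)) := by
  induction k, hik using Nat.le_induction with
  | base => rw [Fin.cast_val_eq_self, Equiv.apply_symm_apply]
  | succ k hik ih =>
    have hfree : ∀ j b, (((k + 1 : ℕ) : Fin (d + 1)), j, b) ∉ M := fun j b hq => by
      have := Fin.le_def.mp (hM _ hq)
      rw [Fin.val_cast_of_lt (by omega : k + 1 < d + 1)] at this
      omega
    rw [faultyRun, applyFaults_of_forall_not_mem hfree, ih (by omega), Equiv.symm_apply_apply]

lemma faultyRun_last_eq_iff (hM : ∀ q ∈ M, q.1 ≤ i) :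
    faultyRun f M t d = f (Fin.last d) t ↔ faultyRun f M t i = f i t := by
  rw [faultyRun_eq_of_forall_level_le f t hM (Nat.lt_succ_iff.mp i.isLt) le_rfl,
    Fin.natCast_eq_last, (f (Fin.last d)).injective.eq_iff, Equiv.symm_apply_eq]

lemma faultyRun_singleton (h0 : f 0 = Equiv.refl _) (j : Fin n) (b : Bool) :
    faultyRun f {(i, j, b)} t i = Function.update (f i t) j b := by
  rw [faultyRun_eq_applyFaults_of_forall_le_level f t h0 (by simp) i.val le_rfl,
    Fin.cast_val_eq_self, applyFaults_singleton]

end faultyRun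

/-- a test set detecting all single stuck-at faults detects all
multiple stuck-at faults (nonempty fault sets with distinct sites). -/
theorem stmt1 {n d : ℕ} (f : Fin (d + 1) → ((Fin n → Bool) ≃ (Fin n → Bool)))
    (h0 : f 0 = Equiv.refl _) (T : Set (Fin n → Bool))
    (hsingle : ∀ M : Finset (Fin (d + 1) × Fin n × Bool), M.card = 1 →
        ∃ t ∈ T, faultyRun f M t d ≠ f (Fin.last d) t) :
    ∀ M : Finset (Fin (d + 1) × Fin n × Bool), M.Nonempty →
      (∀ p ∈ M, ∀ q ∈ M, p.1 = q.1 → p.2.1 = q.2.1 → p = q) →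
      ∃ t ∈ T, faultyRun f M t d ≠ f (Fin.last d) t := by
  intro M hne hdist
  obtain ⟨⟨i, j, b⟩, hmem, hmax⟩ := M.exists_max_image Prod.fst hne
  obtain ⟨t, htT, hdet⟩ := hsingle {(i, j, b)} (Finset.card_singleton _)
  have hwire : f i t j ≠ b := by
    rwa [Ne, faultyRun_last_eq_iff f t (i := i) (by simp), faultyRun_singleton f t h0,
      Function.update_eq_self_iff, eq_comm] at hdet
  refine ⟨t, htT, fun hout => hwire ?_⟩
  rw [faultyRun_last_eq_iff f t hmax] at hout
  rw [← hout, faultyRun_apply_of_mem f t hdist hmem]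
end

section
/- Any set of 2^{n-1} + 1 distinct input vectors is a complete test set for every reversible circuit on n wires: for every level i and wire j, both values 0 and 1 are achieved at wire j, level i, by some vector in the set. -/
lemma filter_card_eq {n : ℕ} (hn : 1 ≤ n) (j : Fin n) (b : Bool) :
    (Finset.univ.filter fun v : Fin n → Bool => v j = b).card = 2 ^ (n - 1) := by
  have key : ∀ b : Bool,
      (Finset.univ.filter fun v : Fin n → Bool => v j = b).card =
      (Finset.univ.filter fun v : Fin n → Bool => v j = !b).card := by
    intro b
    apply Finset.card_bij (fun v _ => Function.update v j (!v j))
    · intro v hv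
      simp only [Finset.mem_filter, Finset.mem_univ, true_and] at hv ⊢
      simp [Function.update_self, hv]
    · intro v₁ h₁ v₂ h₂ h
      simp only [Finset.mem_filter, Finset.mem_univ, true_and] at h₁ h₂
      funext k
      by_cases hk : k = j
      · subst hk; rw [h₁, h₂]
      · have := congrFun h k
        simpa [Function.update_of_ne hk] using this
    · intro v hv
      simp only [Finset.mem_filter, Finset.mem_univ, true_and] at hv
      refine ⟨Function.update v j (!v j), ?_, ?_⟩
      · simp [hv]
      · funext k
        by_cases hk : k = j
        · subst hk; simp [hv]
        · simp [Function.update_of_ne hk]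
  have hsum : (Finset.univ.filter fun v : Fin n → Bool => v j = b).card +
      (Finset.univ.filter fun v : Fin n → Bool => v j = !b).card =
      Fintype.card (Fin n → Bool) := by
    have h := Finset.card_filter_add_card_filter_not
      (s := (Finset.univ : Finset (Fin n → Bool))) (p := fun v => v j = b)
    rw [Finset.card_univ] at h
    rw [← h]
    congr 2
    ext v
    cases b <;> cases hvj : v j <;> simp [hvj]
  have hcard : Fintype.card (Fin n → Bool) = 2 ^ n := by simp
  have h2 : 2 * (Finset.univ.filter fun v : Fin n → Bool => v j = b).card = 2 ^ n := by
    rw [two_mul]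
    rw [← key b] at hsum
    rw [hsum, hcard]
  have hpow : 2 ^ n = 2 * 2 ^ (n - 1) := by
    have h1 : n - 1 + 1 = n := Nat.succ_pred_eq_of_pos hn
    calc 2 ^ n = 2 ^ (n - 1 + 1) := by rw [h1]
      _ = 2 * 2 ^ (n - 1) := by rw [pow_succ]; ring
  exact Nat.eq_of_mul_eq_mul_left (by norm_num) (h2.trans hpow)

/-- any `2^(n-1) + 1` distinct input vectors form a complete test set
for every reversible circuit on `n` wires. -/
theorem stmt3 {n d : ℕ} (hn : 1 ≤ n)
    (f : Fin (d + 1) → ((Fin n → Bool) ≃ (Fin n → Bool)))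
    (T : Finset (Fin n → Bool)) (hT : 2 ^ (n - 1) + 1 ≤ T.card) :
    ∀ (i : Fin (d + 1)) (j : Fin n),
      (∃ t ∈ T, f i t j = false) ∧ (∃ t' ∈ T, f i t' j = true) := by
  intro i j
  have main : ∀ b : Bool, ∃ t ∈ T, f i t j = b := by
    intro b
    by_contra h
    push_neg at h
    have hsub : T.image (f i) ⊆ Finset.univ.filter fun v => v j = !b := by
      intro v hv
      simp only [Finset.mem_image] at hv
      obtain ⟨t, ht, rfl⟩ := hv
      simp only [Finset.mem_filter, Finset.mem_univ, true_and]
      have := h t ht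
      cases b <;> cases hvj : (f i) t j <;> simp_all
    have := Finset.card_le_card hsub
    rw [Finset.card_image_of_injective _ (f i).injective,
      filter_card_eq hn j (!b)] at this
    omega
  exact ⟨main false, main true⟩
end

section
/- For a reversible circuit on n wires of depth d, the set consisting of the all-zeros vector together with the d+1 vectors f_i⁻¹(bitwise-complement(f_i(0))) for i = 0, 1, ..., d is a complete test set (of size at most d+2): every wire at every level is set to both 0 and 1 by this set. -/
/-- the all-zeros vector together with the `d+1` vectors
`fᵢ⁻¹(complement (fᵢ 0))` form a complete test set: every wire at every level is
set to both `true` and `false`. -/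
theorem stmt4 {n d : ℕ} (f : Fin (d + 1) → ((Fin n → Bool) ≃ (Fin n → Bool)))
    (h0 : f 0 = Equiv.refl _) :
    ∀ (i : Fin (d + 1)) (j : Fin n),
      (∃ t ∈ ({fun _ => false} ∪
          {t | ∃ k : Fin (d + 1), t = (f k).symm fun w => !(f k (fun _ => false) w)} :
          Set (Fin n → Bool)), f i t j = true) ∧
      (∃ t' ∈ ({fun _ => false} ∪
          {t | ∃ k : Fin (d + 1), t = (f k).symm fun w => !(f k (fun _ => false) w)} :
          Set (Fin n → Bool)), f i t' j = false) := by
  intro i j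
  have hz : ((fun _ => false) : Fin n → Bool) ∈
      ({fun _ => false} ∪
        {t | ∃ k : Fin (d + 1), t = (f k).symm fun w => !(f k (fun _ => false) w)} :
        Set (Fin n → Bool)) := Or.inl rfl
  have hc : ((f i).symm fun w => !(f i (fun _ => false) w)) ∈
      ({fun _ => false} ∪
        {t | ∃ k : Fin (d + 1), t = (f k).symm fun w => !(f k (fun _ => false) w)} :
        Set (Fin n → Bool)) := Or.inr ⟨i, rfl⟩
  have hval : f i ((f i).symm fun w => !(f i (fun _ => false) w)) j
      = !(f i (fun _ => false) j) := by
    rw [Equiv.apply_symm_apply]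
  cases hb : f i (fun _ => false) j with
  | false =>
    refine ⟨⟨_, hc, ?_⟩, ⟨_, hz, hb⟩⟩
    rw [hval, hb]; rfl
  | true =>
    refine ⟨⟨_, hz, hb⟩, ⟨_, hc, ?_⟩⟩
    rw [hval, hb]; rfl
end

section
/- Given a reversible circuit with a total of N fault sites (counting one site per wire per level where a gate input or circuit output occurs), and an incomplete test set T (one not covering all 2N stuck-at faults), there exists an input vector t not necessarily in T whose addition to T covers at least half of the faults not yet covered by T. -/
/-- given fault sites with balanced evaluation maps and an incomplete
test set `T` (uncovered fault set `U` nonempty), some input vector covers at least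
half of the faults not yet covered by `T`. -/
theorem stmt5 {n : ℕ} {S : Type*} [Fintype S] [DecidableEq S]
    (v : S → (Fin n → Bool) → Bool)
    (hbal : ∀ (s : S) (b : Bool),
      (Finset.univ.filter fun t : Fin n → Bool => v s t = b).card = 2 ^ (n - 1))
    (T : Finset (Fin n → Bool)) (U : Finset (S × Bool))
    (hU : U = Finset.univ.filter fun p : S × Bool => ∀ u ∈ T, ¬ v p.1 u = !p.2)
    (hne : U.Nonempty) :
    ∃ t : Fin n → Bool,
      U.card ≤ 2 * (U.filter fun p : S × Bool => v p.1 t = !p.2).card := by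
  by_contra h
  push_neg at h
  have key : ∑ t : Fin n → Bool,
      (U.filter fun p : S × Bool => v p.1 t = !p.2).card = U.card * 2 ^ (n - 1) := by
    simp_rw [Finset.card_filter]
    rw [Finset.sum_comm]
    have : ∀ p ∈ U, (∑ t : Fin n → Bool, if v p.1 t = !p.2 then 1 else 0)
        = 2 ^ (n - 1) := by
      intro p _
      rw [← Finset.card_filter]
      exact hbal p.1 (!p.2)
    rw [Finset.sum_congr rfl this, Finset.sum_const, smul_eq_mul]
  have hlt : ∑ t : Fin n → Bool,
      2 * (U.filter fun p : S × Bool => v p.1 t = !p.2).card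
      < ∑ _t : Fin n → Bool, U.card := by
    apply Finset.sum_lt_sum_of_nonempty Finset.univ_nonempty
    intro t _
    exact h t
  rw [← Finset.mul_sum, key, Finset.sum_const, smul_eq_mul] at hlt
  have hcard : (Finset.univ : Finset (Fin n → Bool)).card = 2 ^ n := by
    simp [Finset.card_univ]
  rw [hcard] at hlt
  have hp : 2 ^ n ≤ 2 * 2 ^ (n - 1) := by
    calc 2 ^ n ≤ 2 ^ (n - 1 + 1) := Nat.pow_le_pow_right (by norm_num) (by omega)
      _ = 2 * 2 ^ (n - 1) := by ring
  have h2 : 2 ^ n * U.card ≤ 2 * (U.card * 2 ^ (n - 1)) := by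
    calc 2 ^ n * U.card ≤ 2 * 2 ^ (n - 1) * U.card := Nat.mul_le_mul_right _ hp
      _ = 2 * (U.card * 2 ^ (n - 1)) := by ring
  omega
end

section
/- Every reversible circuit whose fault sites number N (with evaluation maps satisfying the balance property) admits a complete test set of size at most ⌊log₂ N⌋ + 2. -/
/-- a reversible circuit with `N ≥ 1` fault sites (balanced evaluation
maps) admits a complete test set of size at most `⌊log₂ N⌋ + 2`. -/
theorem stmt6 {n : ℕ} {S : Type*} [Fintype S] (hN : 1 ≤ Fintype.card S)
    (v : S → (Fin n → Bool) → Bool)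
    (hbal : ∀ (s : S) (b : Bool),
      (Finset.univ.filter fun t : Fin n → Bool => v s t = b).card = 2 ^ (n - 1)) :
    ∃ T : Finset (Fin n → Bool),
      T.card ≤ Nat.log 2 (Fintype.card S) + 2 ∧
      ∀ (s : S) (b : Bool), ∃ t ∈ T, v s t = !b := by
  classical
  -- n ≥ 1, else the balance hypothesis is contradictory
  have hn : 1 ≤ n := by
    by_contra h
    push_neg at h
    interval_cases n
    obtain ⟨s⟩ := Fintype.card_pos_iff.mp hN
    have h1 := hbal s true
    have h2 := hbal s false
    have hsplit := Finset.card_filter_add_card_filter_not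
      (s := (Finset.univ : Finset (Fin 0 → Bool)))
      (p := fun t => v s t = true)
    have hcard : (Finset.univ : Finset (Fin 0 → Bool)).card = 1 := by
      simp [Finset.card_univ]
    have h2' : (Finset.univ.filter fun t : Fin 0 → Bool => ¬ v s t = true).card = 1 := by
      have : (Finset.univ.filter fun t : Fin 0 → Bool => ¬ v s t = true)
          = (Finset.univ.filter fun t : Fin 0 → Bool => v s t = false) := by
        apply Finset.filter_congr
        intro t _
        simp
      rw [this, h2]; rfl
    rw [h1, h2', hcard] at hsplit
    norm_num at hsplit
  have h2n : (2:ℕ) * 2 ^ (n - 1) = 2 ^ n := by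
    conv_rhs => rw [show n = (n - 1) + 1 from (Nat.succ_pred_eq_of_pos hn).symm]
    rw [pow_succ]; ring
  -- key greedy lemma
  have key : ∀ k : ℕ, ∀ F : Finset (S × Bool), F.card < 2 ^ k →
      ∃ T : Finset (Fin n → Bool), T.card ≤ k ∧
        ∀ f ∈ F, ∃ t ∈ T, v f.1 t = !f.2 := by
    intro k
    induction k with
    | zero =>
      intro F hF
      have : F = ∅ := by
        rw [← Finset.card_eq_zero]; omega
      exact ⟨∅, le_refl 0, by simp [this]⟩
    | succ k ih =>
      intro F hF
      rcases F.eq_empty_or_nonempty with rfl | hFne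
      · exact ⟨∅, by simp, by simp⟩
      -- coverage count of a test vector
      set c : (Fin n → Bool) → ℕ :=
        fun t => (F.filter fun f => v f.1 t = !f.2).card with hc
      -- double counting
      have hsum : ∑ t : Fin n → Bool, c t = F.card * 2 ^ (n - 1) := by
        have h0 : ∑ t : Fin n → Bool, c t
            = ∑ t : Fin n → Bool, ∑ f ∈ F, if v f.1 t = !f.2 then 1 else 0 :=
          Finset.sum_congr rfl fun t _ => Finset.card_filter _ _
        rw [h0, Finset.sum_comm]
        have h1 : ∀ f ∈ F, (∑ t : Fin n → Bool, if v f.1 t = !f.2 then 1 else 0)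
            = 2 ^ (n - 1) := by
          intro f _
          rw [← Finset.card_filter]
          exact hbal f.1 (!f.2)
        rw [Finset.sum_congr rfl h1, Finset.sum_const, smul_eq_mul]
      -- exists a good vector
      have hgood : ∃ t : Fin n → Bool, F.card ≤ 2 * c t := by
        by_contra hcon
        push_neg at hcon
        have hlt : ∑ t : Fin n → Bool, 2 * c t < ∑ t : Fin n → Bool, F.card :=
          Finset.sum_lt_sum_of_nonempty Finset.univ_nonempty (fun t _ => hcon t)
        rw [← Finset.mul_sum, hsum] at hlt
        have hcu : (Finset.univ : Finset (Fin n → Bool)).card = 2 ^ n := by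
          simp [Finset.card_univ]
        rw [Finset.sum_const, hcu, smul_eq_mul] at hlt
        have heq : 2 * (F.card * 2 ^ (n - 1)) = 2 ^ n * F.card := by
          rw [← mul_assoc, mul_comm 2 F.card, mul_assoc, h2n, mul_comm]
        omega
      obtain ⟨t, ht⟩ := hgood
      set F' := F.filter (fun f => ¬ v f.1 t = !f.2) with hF'
      have hsplit : c t + F'.card = F.card :=
        Finset.card_filter_add_card_filter_not (s := F) (p := fun f => v f.1 t = !f.2)
      have hF'lt : F'.card < 2 ^ k := by
        have h2k : (2:ℕ) ^ (k+1) = 2 * 2 ^ k := by ring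
        rw [h2k] at hF
        omega
      obtain ⟨T', hT'card, hT'cov⟩ := ih F' hF'lt
      refine ⟨insert t T', ?_, ?_⟩
      · calc (insert t T').card ≤ T'.card + 1 := Finset.card_insert_le _ _
          _ ≤ k + 1 := by omega
      · intro f hf
        by_cases hft : v f.1 t = !f.2
        · exact ⟨t, Finset.mem_insert_self _ _, hft⟩
        · obtain ⟨t', ht'T, ht'⟩ := hT'cov f (Finset.mem_filter.mpr ⟨hf, hft⟩)
          exact ⟨t', Finset.mem_insert_of_mem ht'T, ht'⟩
  -- apply the key lemma with all faults
  have hcardF : (Finset.univ : Finset (S × Bool)).card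
      < 2 ^ (Nat.log 2 (Fintype.card S) + 2) := by
    have h1 : Fintype.card S < 2 ^ (Nat.log 2 (Fintype.card S) + 1) :=
      Nat.lt_pow_succ_log_self (by norm_num) _
    have h2 : (Finset.univ : Finset (S × Bool)).card = Fintype.card S * 2 := by
      simp [Finset.card_univ]
    rw [h2]
    have h3 : (2:ℕ) ^ (Nat.log 2 (Fintype.card S) + 2)
        = 2 ^ (Nat.log 2 (Fintype.card S) + 1) * 2 := by ring
    omega
  obtain ⟨T, hTcard, hTcov⟩ := key _ _ hcardF
  exact ⟨T, hTcard, fun s b => hTcov (s, b) (Finset.mem_univ _)⟩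
end

section
/- If a test set T₁ is complete for reversible circuit C₁ and T₂ is complete for C₂, then the test set obtained by tracing T₂ back through C₁ (i.e., T₁ ∪ f₁⁻¹(T₂), where f₁ is the function computed by C₁) is complete for the concatenated circuit C₁C₂; hence the minimal complete test set of a concatenation has size at most the sum of the sizes of minimal complete test sets of the parts. -/
/-!
Each level of `C₁C₂` is either a level `f i` of `C₁`, already separated by `T₁`, or a level
`g i ∘ f_{d₁}` of `C₂` precomposed with the bijection `f_{d₁}`; pulling `T₂` back along
`f_{d₁}` transports the values `T₂` produces at `g i` to exactly these levels.
-/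

section CompleteTestSet

variable {ι ι' α β κ : Type*}

def IsCompleteTestSet (F : ι → α → κ → Bool) (T : Set α) : Prop :=
  ∀ i j, (∃ t ∈ T, F i t j = true) ∧ (∃ t ∈ T, F i t j = false)

theorem IsCompleteTestSet.mono {F : ι → α → κ → Bool} {S T : Set α}
    (hS : IsCompleteTestSet F S) (hST : S ⊆ T) : IsCompleteTestSet F T := fun i j =>
  let ⟨⟨t, ht, e⟩, ⟨t', ht', e'⟩⟩ := hS i j
  ⟨⟨t, hST ht, e⟩, ⟨t', hST ht', e'⟩⟩

theorem IsCompleteTestSet.of_forall_exists_eq {F : ι → α → κ → Bool} {G : ι' → α → κ → Bool}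
    {T : Set α} (hF : IsCompleteTestSet F T) (hG : ∀ i, ∃ k, G i = F k) :
    IsCompleteTestSet G T := fun i j => by
  obtain ⟨k, hk⟩ := hG i
  rw [hk]
  exact hF k j

theorem IsCompleteTestSet.comp {G : ι → β → κ → Bool} {T : Set β} (hG : IsCompleteTestSet G T)
    (e : α → β) {S : Set α} (hS : T ⊆ e '' S) : IsCompleteTestSet (fun i => G i ∘ e) S :=
  fun i j => by
  obtain ⟨⟨t, ht, e₁⟩, ⟨t', ht', e₂⟩⟩ := hG i j
  obtain ⟨s, hs, rfl⟩ := hS ht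
  obtain ⟨s', hs', rfl⟩ := hS ht'
  exact ⟨⟨s, hs, e₁⟩, ⟨s', hs', e₂⟩⟩

theorem IsCompleteTestSet.comp_equiv {G : ι → β → κ → Bool} {T : Set β}
    (hG : IsCompleteTestSet G T) (e : α ≃ β) :
    IsCompleteTestSet (fun i => G i ∘ e) (e.symm '' T) :=
  hG.comp e (by rw [Equiv.image_symm_image])

theorem IsCompleteTestSet.union_of_forall {F : ι → α → κ → Bool} {F' : ι' → α → κ → Bool}
    {H : Type*} {G : H → α → κ → Bool} {S T : Set α}
    (hF : IsCompleteTestSet F S) (hF' : IsCompleteTestSet F' T)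
    (hG : ∀ i, (∃ k, G i = F k) ∨ ∃ k, G i = F' k) :
    IsCompleteTestSet G (S ∪ T) := fun i j =>
  (hG i).elim
    (fun hi => ((hF.mono Set.subset_union_left).of_forall_exists_eq fun _ => hi) i j)
    (fun hi => ((hF'.mono Set.subset_union_right).of_forall_exists_eq fun _ => hi) i j)

end CompleteTestSet

theorem Fin.exists_castLE_or_exists_add {d₁ d₂ : ℕ} (i : Fin (d₁ + d₂ + 1)) :
    (∃ k : Fin (d₁ + 1), Fin.castLE (Nat.add_le_add_right (Nat.le_add_right d₁ d₂) 1) k = i) ∨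
      ∃ k : Fin (d₂ + 1), (⟨d₁ + k.1, Nat.add_lt_add_left k.2 d₁⟩ : Fin (d₁ + d₂ + 1)) = i := by
  by_cases hi : i.1 ≤ d₁
  · exact Or.inl ⟨⟨i.1, by omega⟩, rfl⟩
  · exact Or.inr ⟨⟨i.1 - d₁, by omega⟩, Fin.ext (by simp only; omega)⟩

/-- if `T₁` is complete for `C₁` and `T₂` for `C₂`, then
`T₁ ∪ f_{d₁}⁻¹(T₂)` is complete for the concatenated circuit `C₁C₂`. -/
theorem stmt7 {n d₁ d₂ : ℕ}
    (f : Fin (d₁ + 1) → ((Fin n → Bool) ≃ (Fin n → Bool)))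
    (g : Fin (d₂ + 1) → ((Fin n → Bool) ≃ (Fin n → Bool)))
    (T₁ T₂ : Set (Fin n → Bool))
    (h₁ : ∀ (i : Fin (d₁ + 1)) (j : Fin n),
      (∃ t ∈ T₁, f i t j = true) ∧ (∃ t ∈ T₁, f i t j = false))
    (h₂ : ∀ (i : Fin (d₂ + 1)) (j : Fin n),
      (∃ t ∈ T₂, g i t j = true) ∧ (∃ t ∈ T₂, g i t j = false))
    (h : Fin (d₁ + d₂ + 1) → ((Fin n → Bool) ≃ (Fin n → Bool)))
    (hh1 : ∀ i : Fin (d₁ + 1), h (Fin.castLE (by omega) i) = f i)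
    (hh2 : ∀ i : Fin (d₂ + 1),
      h ⟨d₁ + i.1, by have := i.2; omega⟩ = (f (Fin.last d₁)).trans (g i)) :
    ∀ (i : Fin (d₁ + d₂ + 1)) (j : Fin n),
      (∃ t ∈ T₁ ∪ (f (Fin.last d₁)).symm '' T₂, h i t j = true) ∧
      (∃ t ∈ T₁ ∪ (f (Fin.last d₁)).symm '' T₂, h i t j = false) := by
  have hC₁ : IsCompleteTestSet (fun i => ⇑(f i)) T₁ := h₁
  have hC₂ : IsCompleteTestSet (fun i => ⇑(g i)) T₂ := h₂
  have hlevels : ∀ i, (∃ k, ⇑(h i) = f k) ∨ ∃ k, ⇑(h i) = g k ∘ f (Fin.last d₁) := by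
    intro i
    rcases Fin.exists_castLE_or_exists_add i with ⟨k, rfl⟩ | ⟨k, rfl⟩
    · exact Or.inl ⟨k, by rw [hh1]⟩
    · exact Or.inr ⟨k, by rw [hh2]; rfl⟩
  exact hC₁.union_of_forall (hC₂.comp_equiv (f (Fin.last d₁))) hlevels
end

section
/- If reversible circuits C₁ and C₂ act on disjoint sets of wires and have minimal complete test sets of sizes m₁ and m₂ respectively, then the circuit formed by placing them side by side has a minimal complete test set of size exactly max(m₁, m₂). -/
/-- The level bijection of two side-by-side circuits on disjoint wire sets. -/
def sideBySide {A B : Type*} (e₁ : (A → Bool) ≃ (A → Bool)) (e₂ : (B → Bool) ≃ (B → Bool)) :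
    ((A ⊕ B) → Bool) ≃ ((A ⊕ B) → Bool) :=
  (Equiv.sumArrowEquivProdArrow A B Bool).trans
    ((e₁.prodCongr e₂).trans (Equiv.sumArrowEquivProdArrow A B Bool).symm)

/-- Completeness of a test set for a circuit given by its level bijections. -/
def CompleteTS {W : Type*} {d : ℕ} (F : Fin (d + 1) → ((W → Bool) ≃ (W → Bool)))
    (T : Finset (W → Bool)) : Prop :=
  ∀ (i : Fin (d + 1)) (w : W), (∃ t ∈ T, F i t w = true) ∧ (∃ t ∈ T, F i t w = false)

lemma sbs_inl {A B : Type*} (e₁ : (A → Bool) ≃ (A → Bool)) (e₂ : (B → Bool) ≃ (B → Bool))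
    (v : (A ⊕ B) → Bool) (a : A) :
    sideBySide e₁ e₂ v (Sum.inl a) = e₁ (v ∘ Sum.inl) a := rfl

lemma sbs_inr {A B : Type*} (e₁ : (A → Bool) ≃ (A → Bool)) (e₂ : (B → Bool) ≃ (B → Bool))
    (v : (A ⊕ B) → Bool) (b : B) :
    sideBySide e₁ e₂ v (Sum.inr b) = e₂ (v ∘ Sum.inr) b := rfl

lemma exists_cover {X : Type*} [Inhabited X] {S : Finset X} {N : ℕ} (h : S.card ≤ N) :
    ∃ s : Fin N → X, ∀ t ∈ S, ∃ k, s k = t := by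
  refine ⟨fun k => if h' : (k : ℕ) < S.card then (S.equivFin.symm ⟨k, h'⟩ : X) else default, ?_⟩
  intro t ht
  obtain ⟨j, hj⟩ := S.equivFin.symm.surjective ⟨t, ht⟩
  refine ⟨⟨j, j.2.trans_le h⟩, ?_⟩
  simp only [j.2, dif_pos]
  rw [show (⟨(j : ℕ), j.2⟩ : Fin S.card) = j from rfl, hj]

/-- for circuits `C₁`, `C₂` on disjoint wire sets with minimal complete
test set sizes `m₁`, `m₂`, the side-by-side circuit has minimal complete test set
size exactly `max m₁ m₂`. -/
theorem stmt9 {A B : Type*} [Fintype A] [Fintype B] {d : ℕ}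
    (f : Fin (d + 1) → ((A → Bool) ≃ (A → Bool)))
    (g : Fin (d + 1) → ((B → Bool) ≃ (B → Bool))) (m₁ m₂ : ℕ)
    (hm₁ : IsLeast {m | ∃ T : Finset (A → Bool), T.card = m ∧ CompleteTS f T} m₁)
    (hm₂ : IsLeast {m | ∃ T : Finset (B → Bool), T.card = m ∧ CompleteTS g T} m₂) :
    IsLeast {m | ∃ T : Finset ((A ⊕ B) → Bool), T.card = m ∧
      CompleteTS (fun i => sideBySide (f i) (g i)) T} (max m₁ m₂) := by
  obtain ⟨⟨T₁, hc₁, hT₁⟩, hlb₁⟩ := hm₁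
  obtain ⟨⟨T₂, hc₂, hT₂⟩, hlb₂⟩ := hm₂
  have proj : ∀ T : Finset ((A ⊕ B) → Bool),
      CompleteTS (fun i => sideBySide (f i) (g i)) T → max m₁ m₂ ≤ T.card := by
    intro T hT
    have h1 : CompleteTS f (T.image (fun v => v ∘ Sum.inl)) := by
      intro i a
      obtain ⟨⟨t, ht, htt⟩, ⟨u, hu, huu⟩⟩ := hT i (Sum.inl a)
      exact ⟨⟨t ∘ Sum.inl, Finset.mem_image_of_mem _ ht, htt⟩,
             ⟨u ∘ Sum.inl, Finset.mem_image_of_mem _ hu, huu⟩⟩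
    have h2 : CompleteTS g (T.image (fun v => v ∘ Sum.inr)) := by
      intro i b
      obtain ⟨⟨t, ht, htt⟩, ⟨u, hu, huu⟩⟩ := hT i (Sum.inr b)
      exact ⟨⟨t ∘ Sum.inr, Finset.mem_image_of_mem _ ht, htt⟩,
             ⟨u ∘ Sum.inr, Finset.mem_image_of_mem _ hu, huu⟩⟩
    have le1 : m₁ ≤ T.card :=
      le_trans (hlb₁ ⟨_, rfl, h1⟩) (Finset.card_image_le)
    have le2 : m₂ ≤ T.card :=
      le_trans (hlb₂ ⟨_, rfl, h2⟩) (Finset.card_image_le)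
    exact max_le le1 le2
  constructor
  · -- membership
    set N := max m₁ m₂ with hN
    obtain ⟨s₁, hs₁⟩ := exists_cover (S := T₁) (N := N) (hc₁ ▸ le_max_left m₁ m₂)
    obtain ⟨s₂, hs₂⟩ := exists_cover (S := T₂) (N := N) (hc₂ ▸ le_max_right m₁ m₂)
    set T : Finset ((A ⊕ B) → Bool) :=
      Finset.image (fun k : Fin N => Sum.elim (s₁ k) (s₂ k)) Finset.univ with hT
    have hcomp : CompleteTS (fun i => sideBySide (f i) (g i)) T := by
      intro i w
      cases w with
      | inl a =>
        obtain ⟨⟨t, ht, htt⟩, ⟨u, hu, huu⟩⟩ := hT₁ i a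
        obtain ⟨k, hk⟩ := hs₁ t ht
        obtain ⟨k', hk'⟩ := hs₁ u hu
        constructor
        · refine ⟨Sum.elim (s₁ k) (s₂ k), Finset.mem_image_of_mem _ (Finset.mem_univ k), ?_⟩
          rw [sbs_inl, Sum.elim_comp_inl, hk]; exact htt
        · refine ⟨Sum.elim (s₁ k') (s₂ k'), Finset.mem_image_of_mem _ (Finset.mem_univ k'), ?_⟩
          rw [sbs_inl, Sum.elim_comp_inl, hk']; exact huu
      | inr b =>
        obtain ⟨⟨t, ht, htt⟩, ⟨u, hu, huu⟩⟩ := hT₂ i b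
        obtain ⟨k, hk⟩ := hs₂ t ht
        obtain ⟨k', hk'⟩ := hs₂ u hu
        constructor
        · refine ⟨Sum.elim (s₁ k) (s₂ k), Finset.mem_image_of_mem _ (Finset.mem_univ k), ?_⟩
          rw [sbs_inr, Sum.elim_comp_inr, hk]; exact htt
        · refine ⟨Sum.elim (s₁ k') (s₂ k'), Finset.mem_image_of_mem _ (Finset.mem_univ k'), ?_⟩
          rw [sbs_inr, Sum.elim_comp_inr, hk']; exact huu
    refine ⟨T, le_antisymm ?_ (proj T hcomp), hcomp⟩
    calc T.card ≤ (Finset.univ : Finset (Fin N)).card := Finset.card_image_le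
      _ = N := by simp
  · rintro m ⟨T, rfl, hT⟩
    exact proj T hT
end

section
/- No set of n input vectors is complete for all linear reversible circuits on n wires: for any T ⊆ F₂ⁿ with |T| = n, there exists a linear bijection f of F₂ⁿ (hence a one-level linear reversible circuit) for which T fails to set some wire to both values. In particular, any test set complete for all linear reversible circuits on n wires has at least n+1 vectors. -/
open Module

/-- An involution `x ↦ x + ψ x • v` (char 2), when `ψ v = 0`, as a linear equivalence. -/
lemma stmt11_invol {M : Type*} [AddCommGroup M] [Module (ZMod 2) M]
    (ψ : M →ₗ[ZMod 2] ZMod 2) (v : M) (hv : ψ v = 0) :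
    ∃ f : M ≃ₗ[ZMod 2] M, ∀ x, f x = x + ψ x • v := by
  have hinv : Function.Involutive ⇑(((LinearMap.id : M →ₗ[ZMod 2] M) + ψ.smulRight v)) := by
    intro x
    have h2 : ∀ a : ZMod 2, a + a = 0 := by decide
    simp only [LinearMap.add_apply, LinearMap.id_apply, LinearMap.smulRight_apply,
      map_add, map_smul, hv, smul_eq_mul, mul_zero, add_zero, zero_smul, smul_zero]
    rw [add_assoc, ← add_smul, h2, zero_smul, add_zero]
  refine ⟨LinearEquiv.ofInvolutive (((LinearMap.id : M →ₗ[ZMod 2] M) + ψ.smulRight v)) hinv, fun x => ?_⟩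
  simp [LinearEquiv.coe_ofInvolutive]

lemma stmt11_key {n : ℕ} (hn : 1 ≤ n) (T : Finset (Fin n → ZMod 2)) (hT : T.card ≤ n) :
    ∃ f : (Fin n → ZMod 2) ≃ₗ[ZMod 2] (Fin n → ZMod 2),
      (∀ t ∈ T, f t ⟨0, hn⟩ = 1) ∨ (∀ t ∈ T, f t ⟨0, hn⟩ = 0) := by
  have hone : ∀ a : ZMod 2, a ≠ 0 → a = 1 := by decide
  have hzero : ∀ a : ZMod 2, a ≠ 1 → a = 0 := by decide
  set j0 : Fin n := ⟨0, hn⟩ with hj0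
  set e0 : (Fin n → ZMod 2) := Pi.single j0 (1 : ZMod 2) with he0
  have he0j : e0 j0 = 1 := by simp [he0]
  set δ0 : (Fin n → ZMod 2) →ₗ[ZMod 2] ZMod 2 := LinearMap.proj j0 with hδ0
  have hδ0apply : ∀ x : Fin n → ZMod 2, δ0 x = x j0 := fun _ => rfl
  by_cases hspan :
      Submodule.span (ZMod 2) (T : Set (Fin n → ZMod 2)) = ⊤
  · -- spanning case: T is a basis; make all outputs have coordinate 1
    have hfr : finrank (ZMod 2) (Fin n → ZMod 2) = n := Module.finrank_fin_fun (ZMod 2)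
    have hnle : n ≤ T.card := by
      have h := finrank_span_finset_le_card (R := ZMod 2) T
      rw [Set.finrank, hspan, finrank_top, hfr] at h
      exact h
    have hcardT : Fintype.card T = n := by
      rw [Fintype.card_coe]; omega
    have hle : ⊤ ≤ Submodule.span (ZMod 2)
        (Set.range ((↑) : T → (Fin n → ZMod 2))) := by
      rw [Subtype.range_coe]; exact hspan.ge
    let b : Basis T (ZMod 2) (Fin n → ZMod 2) :=
      basisOfTopLeSpanOfCardEqFinrank ((↑) : T → (Fin n → ZMod 2)) hle
        (by rw [hcardT, hfr])
    have hb : ∀ t : T, b t = (t : Fin n → ZMod 2) := fun t => by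
      rw [coe_basisOfTopLeSpanOfCardEqFinrank]
    set ψ : (Fin n → ZMod 2) →ₗ[ZMod 2] ZMod 2 :=
      b.constr (ZMod 2) (fun t => 1 + (t : Fin n → ZMod 2) j0) with hψ
    have hψT : ∀ t ∈ T, ψ t = 1 + t j0 := by
      intro t ht
      have := b.constr_basis (ZMod 2)
        (fun t : T => 1 + (t : Fin n → ZMod 2) j0) ⟨t, ht⟩
      rwa [hb ⟨t, ht⟩] at this
    -- find v with v j0 = 1 and ψ v = 0
    obtain ⟨v, hv1, hv0⟩ : ∃ v : Fin n → ZMod 2, v j0 = 1 ∧ ψ v = 0 := by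
      by_cases hψe : ψ e0 = 0
      · exact ⟨e0, he0j, hψe⟩
      · obtain ⟨t0, ht0⟩ : T.Nonempty := Finset.card_pos.mp (by omega)
        by_cases hw : t0 j0 = 1
        · refine ⟨t0, hw, ?_⟩
          rw [hψT t0 ht0, hw]
          decide
        · have hw0 : t0 j0 = 0 := hzero _ hw
          refine ⟨t0 + e0, ?_, ?_⟩
          · show t0 j0 + e0 j0 = 1
            rw [hw0, he0j, zero_add]
          · rw [map_add, hψT t0 ht0, hw0, hone _ hψe]
            decide
    obtain ⟨f, hf⟩ := stmt11_invol ψ v hv0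
    refine ⟨f, Or.inl fun t ht => ?_⟩
    rw [hf t]
    show t j0 + ψ t * v j0 = 1
    rw [hψT t ht, hv1]
    have : ∀ a : ZMod 2, a + (1 + a) * 1 = 1 := by decide
    exact this _
  · -- non-spanning case: a functional vanishing on T
    obtain ⟨φ, hφne, hφmap⟩ :=
      (Submodule.span (ZMod 2) (T : Set (Fin n → ZMod 2))).exists_dual_map_eq_bot_of_lt_top
        (lt_top_iff_ne_top.mpr hspan) inferInstance
    have hφT : ∀ t ∈ T, φ t = 0 := by
      intro t ht
      have : φ t ∈ (Submodule.span (ZMod 2) (T : Set (Fin n → ZMod 2))).map φ :=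
        Submodule.mem_map_of_mem (Submodule.subset_span ht)
      rw [hφmap] at this; simpa using this
    obtain ⟨u, hu⟩ : ∃ u, φ u ≠ 0 := by
      by_contra h; push_neg at h; exact hφne (LinearMap.ext fun x => h x)
    have hu1 : φ u = 1 := hone _ hu
    set ψ : (Fin n → ZMod 2) →ₗ[ZMod 2] ZMod 2 := φ + δ0 with hψ
    -- find v with φ v = 1 and v j0 = 1
    obtain ⟨v, hv1, hvj⟩ : ∃ v : Fin n → ZMod 2, φ v = 1 ∧ v j0 = 1 := by
      by_cases huj : u j0 = 1
      · exact ⟨u, hu1, huj⟩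
      · have huj0 : u j0 = 0 := hzero _ huj
        by_cases hpe : φ e0 = 1
        · exact ⟨e0, hpe, he0j⟩
        · have hpe0 : φ e0 = 0 := hzero _ hpe
          refine ⟨u + e0, by rw [map_add, hu1, hpe0, add_zero], ?_⟩
          show u j0 + e0 j0 = 1
          rw [huj0, he0j, zero_add]
    have hψv : ψ v = 0 := by
      rw [hψ, LinearMap.add_apply, hδ0apply, hv1, hvj]; decide
    obtain ⟨f, hf⟩ := stmt11_invol ψ v hψv
    refine ⟨f, Or.inr fun t ht => ?_⟩
    rw [hf t]
    show t j0 + ψ t * v j0 = 0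
    rw [hψ, LinearMap.add_apply, hδ0apply, hφT t ht, zero_add, hvj]
    have : ∀ a : ZMod 2, a + a * 1 = 0 := by decide
    exact this _

/-- no set of `n` input vectors is complete for all linear reversible
circuits on `n` wires; hence any universally complete test set for linear circuits
has at least `n+1` vectors. -/
theorem stmt11 {n : ℕ} (hn : 1 ≤ n) :
    (∀ T : Finset (Fin n → ZMod 2), T.card = n →
      ∃ f : (Fin n → ZMod 2) ≃ₗ[ZMod 2] (Fin n → ZMod 2), ∃ j : Fin n,
        ¬ ((∃ t ∈ T, f t j = 1) ∧ (∃ t ∈ T, f t j = 0))) ∧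
    (∀ T : Finset (Fin n → ZMod 2),
      (∀ (f : (Fin n → ZMod 2) ≃ₗ[ZMod 2] (Fin n → ZMod 2)) (j : Fin n),
        (∃ t ∈ T, f t j = 1) ∧ (∃ t ∈ T, f t j = 0)) →
      n + 1 ≤ T.card) := by
  have key : ∀ T : Finset (Fin n → ZMod 2), T.card ≤ n →
      ∃ f : (Fin n → ZMod 2) ≃ₗ[ZMod 2] (Fin n → ZMod 2), ∃ j : Fin n,
        ¬ ((∃ t ∈ T, f t j = 1) ∧ (∃ t ∈ T, f t j = 0)) := by
    intro T hT
    obtain ⟨f, hf | hf⟩ := stmt11_key hn T hT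
    · exact ⟨f, ⟨0, hn⟩, fun ⟨_, ⟨t, ht, h0⟩⟩ => by
        rw [hf t ht] at h0; exact one_ne_zero h0⟩
    · exact ⟨f, ⟨0, hn⟩, fun ⟨⟨t, ht, h1⟩, _⟩ => by
        rw [hf t ht] at h1; exact zero_ne_one h1⟩
  refine ⟨fun T hT => key T hT.le, fun T hcomp => ?_⟩
  by_contra h
  push_neg at h
  obtain ⟨f, j, hfj⟩ := key T (by omega)
  exact hfj (hcomp f j)
end

section
/- For every set T of 2^{n-1} input vectors in F₂ⁿ there exists a permutation π of F₂ⁿ mapping every element of T to a vector whose first coordinate is 0; consequently, no test set of size ≤ 2^{n-1} is complete for all reversible circuits built from arbitrary n×n reversible gates, and together with the sufficiency of any 2^{n-1}+1 vectors, the minimum size of a universally complete test set for the universal gate library is exactly 2^{n-1}+1. -/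
lemma card_half {n : ℕ} (hn : 1 ≤ n) (j : Fin n) (b : Bool) :
    Fintype.card {v : Fin n → Bool // v j = b} = 2 ^ (n - 1) := by
  have flip : ∀ b : Bool, {v : Fin n → Bool // v j = b} ≃ {v : Fin n → Bool // v j = !b} := by
    intro b
    refine ⟨fun v => ⟨Function.update v.1 j (!b), by simp⟩,
      fun v => ⟨Function.update v.1 j b, by simp⟩, ?_, ?_⟩
    · rintro ⟨v, hv⟩
      apply Subtype.ext
      simp only [Function.update_idem]
      rw [← hv, Function.update_eq_self]
    · rintro ⟨v, hv⟩
      apply Subtype.ext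
      simp only [Function.update_idem]
      rw [← hv, Function.update_eq_self]
  have hkey : Fintype.card {v : Fin n → Bool // v j = b} =
      2 ^ n - Fintype.card {v : Fin n → Bool // v j = b} := by
    have hcompl : Fintype.card {v : Fin n → Bool // ¬ v j = b} =
        Fintype.card (Fin n → Bool) - Fintype.card {v : Fin n → Bool // v j = b} :=
      Fintype.card_subtype_compl _
    have e : {v : Fin n → Bool // ¬ v j = b} ≃ {v : Fin n → Bool // v j = !b} := by
      apply Equiv.subtypeEquivRight
      intro v
      cases b <;> simp
    have htot : Fintype.card (Fin n → Bool) = 2 ^ n := by simp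
    rw [← htot]
    rw [← hcompl, Fintype.card_congr e, Fintype.card_congr (flip b)]
  have hle : Fintype.card {v : Fin n → Bool // v j = b} ≤ 2 ^ n := by
    calc Fintype.card {v : Fin n → Bool // v j = b} ≤ Fintype.card (Fin n → Bool) :=
          Fintype.card_subtype_le _
      _ = 2 ^ n := by simp
  have hpow : 2 ^ n = 2 ^ (n - 1) + 2 ^ (n - 1) := by
    obtain ⟨m, rfl⟩ : ∃ m, n = m + 1 := ⟨n - 1, Nat.succ_pred_eq_of_pos hn |>.symm⟩
    simp [pow_succ]
    ring
  clear flip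
  generalize Fintype.card {v : Fin n → Bool // v j = b} = c at hkey hle ⊢
  omega

lemma map_into_false {n : ℕ} (hn : 1 ≤ n) (T : Finset (Fin n → Bool))
    (hT : T.card = 2 ^ (n - 1)) :
    ∃ π : Equiv.Perm (Fin n → Bool), ∀ t ∈ T, π t ⟨0, hn⟩ = false := by
  classical
  have h1 : Fintype.card {v : Fin n → Bool // v ∈ T} =
      Fintype.card {v : Fin n → Bool // v ⟨0, hn⟩ = false} := by
    rw [card_half hn, Fintype.card_coe, hT]
  have h2 : Fintype.card {v : Fin n → Bool // ¬ v ∈ T} =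
      Fintype.card {v : Fin n → Bool // ¬ v ⟨0, hn⟩ = false} := by
    rw [Fintype.card_subtype_compl, Fintype.card_subtype_compl, h1]
  obtain ⟨e⟩ := Fintype.card_eq.mp h1
  obtain ⟨e'⟩ := Fintype.card_eq.mp h2
  refine ⟨Equiv.subtypeCongr e e', fun t ht => ?_⟩
  have : Equiv.subtypeCongr e e' t = (e ⟨t, ht⟩ : Fin n → Bool) := by
    simp [Equiv.subtypeCongr, ht]
  rw [this]
  exact (e ⟨t, ht⟩).2

/-- every set of `2^(n-1)` vectors can be mapped by some permutation
of `(Fin n → Bool)` into the vectors with first coordinate `false`; hence no test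
set of size `≤ 2^(n-1)` is complete for all circuits over the universal gate
library, and the minimal universally complete test set size is exactly
`2^(n-1) + 1`. -/
theorem stmt13 {n : ℕ} (hn : 1 ≤ n) :
    (∀ T : Finset (Fin n → Bool), T.card = 2 ^ (n - 1) →
      ∃ π : Equiv.Perm (Fin n → Bool), ∀ t ∈ T, π t ⟨0, hn⟩ = false) ∧
    (∀ T : Finset (Fin n → Bool), T.card ≤ 2 ^ (n - 1) →
      ∃ π : Equiv.Perm (Fin n → Bool), ¬ ∃ t ∈ T, π t ⟨0, hn⟩ = true) ∧
    IsLeast {m | ∃ T : Finset (Fin n → Bool), T.card = m ∧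
        ∀ (π : Equiv.Perm (Fin n → Bool)) (j : Fin n),
          (∃ t ∈ T, π t j = true) ∧ (∃ t ∈ T, π t j = false)}
      (2 ^ (n - 1) + 1) := by
  classical
  have hpow : 2 ^ (n - 1) + 2 ^ (n - 1) = 2 ^ n := by
    obtain ⟨m, rfl⟩ : ∃ m, n = m + 1 := ⟨n - 1, Nat.succ_pred_eq_of_pos hn |>.symm⟩
    simp [pow_succ]
    ring
  have htot : Fintype.card (Fin n → Bool) = 2 ^ n := by simp
  have hone : 1 ≤ 2 ^ (n - 1) := Nat.one_le_two_pow
  -- part 2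
  have part2 : ∀ T : Finset (Fin n → Bool), T.card ≤ 2 ^ (n - 1) →
      ∃ π : Equiv.Perm (Fin n → Bool), ¬ ∃ t ∈ T, π t ⟨0, hn⟩ = true := by
    intro T hT
    obtain ⟨S, hTS, hS⟩ := Finset.exists_superset_card_eq (s := T) hT (by
      rw [htot]; omega)
    obtain ⟨π, hπ⟩ := map_into_false hn S hS
    refine ⟨π, ?_⟩
    rintro ⟨t, ht, htrue⟩
    rw [hπ t (hTS ht)] at htrue
    simp at htrue
  refine ⟨map_into_false hn, part2, ?_, ?_⟩
  · -- membership: a test set of size 2^(n-1)+1 works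
    obtain ⟨T, -, hT⟩ := Finset.exists_subset_card_eq (s := (Finset.univ : Finset (Fin n → Bool)))
      (n := 2 ^ (n - 1) + 1) (by rw [Finset.card_univ, htot]; omega)
    refine ⟨T, hT, fun π j => ?_⟩
    have key : ∀ b : Bool, ∃ t ∈ T, π t j = b := by
      intro b
      by_contra hcon
      push_neg at hcon
      have hinj : Function.Injective
          (fun t : {v : Fin n → Bool // v ∈ T} => (⟨π t.1, by
            have := hcon t.1 t.2
            cases h : π t.1 j
            · cases b
              · exact absurd h this
              · rfl
            · cases b
              · rfl
              · exact absurd h this⟩ : {v : Fin n → Bool // v j = !b})) := by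
        rintro ⟨a, ha⟩ ⟨c, hc⟩ h
        simp only [Subtype.mk.injEq] at h
        exact Subtype.ext (π.injective h)
      have hle := Fintype.card_le_of_injective _ hinj
      rw [Fintype.card_coe, hT, card_half hn] at hle
      omega
    exact ⟨key true, key false⟩
  · -- lower bound
    rintro m ⟨T, hTm, hprop⟩
    by_contra hlt
    push_neg at hlt
    obtain ⟨π, hπ⟩ := part2 T (by omega)
    exact hπ ((hprop π ⟨0, hn⟩).1)
end

section
/- For n ≥ 2 and any set T of 2^{n-1} vectors in (Fin n → Bool), there exists an even permutation π of (Fin n → Bool) mapping every element of T into the set of vectors with first coordinate false; hence a test set complete for all circuits over a gate library computing exactly the even permutations must have at least 2^{n-1}+1 vectors. -/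
/-!
A permutation may send any `2^(n-1)` vectors into the half-cube `{v | v 0 = false}`, which has
exactly `2^(n-1)` elements. If it is odd, composing with a transposition of two points of the
half-cube (there are at least two since `n ≥ 2`) makes it even without moving the image out of
the half-cube. So no set of at most `2^(n-1)` vectors can detect a stuck-at-`true` fault on the
first line under every even permutation.
-/

open Finset Equiv

namespace Equiv.Perm

variable {α : Type*} [Fintype α] [DecidableEq α]

theorem exists_mapsTo_of_card_le {s t : Finset α} (hst : #s ≤ #t) :
    ∃ σ : Perm α, ∀ x ∈ s, σ x ∈ t := by
  obtain ⟨t', ht't, hcard⟩ := exists_subset_card_eq hst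
  let e : {x // x ∈ s} ≃ {x // x ∈ t'} := equivOfCardEq hcard.symm
  exact ⟨e.extendSubtype, fun x hx => ht't (e.extendSubtype_mem x hx)⟩

theorem exists_sign_eq_one_mapsTo_of_card_le {s t : Finset α} (hst : #s ≤ #t) (ht : 1 < #t) :
    ∃ σ : Perm α, sign σ = 1 ∧ ∀ x ∈ s, σ x ∈ t := by
  obtain ⟨σ, hσ⟩ := exists_mapsTo_of_card_le hst
  obtain ⟨a, ha, b, hb, hab⟩ := one_lt_card.mp ht
  rcases Int.units_eq_one_or (sign σ) with hsign | hsign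
  · exact ⟨σ, hsign, hσ⟩
  refine ⟨swap a b * σ, by simp [sign_swap hab, hsign], fun x hx => ?_⟩
  have hswap : ∀ y ∈ t, swap a b y ∈ t := fun y hy => by
    rcases eq_or_ne y a with rfl | hya
    · simpa using hb
    rcases eq_or_ne y b with rfl | hyb
    · simpa using ha
    simpa [swap_apply_of_ne_of_ne hya hyb] using hy
  exact hswap _ (hσ x hx)

end Equiv.Perm

theorem Fintype.card_filter_apply_eq {ι β : Type*} [Fintype ι] [DecidableEq ι] [Fintype β]
    [DecidableEq β] (i : ι) (b : β) :
    #{f : ι → β | f i = b} = Fintype.card β ^ (Fintype.card ι - 1) := by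
  simpa using Fintype.card_filter_piFinset_const_eq_of_mem (univ : Finset β) i (mem_univ b)

theorem exists_sign_eq_one_forall_apply_eq_false {ι : Type*} [Fintype ι] [DecidableEq ι]
    (hι : 2 ≤ Fintype.card ι) (i : ι) {T : Finset (ι → Bool)}
    (hT : #T ≤ 2 ^ (Fintype.card ι - 1)) :
    ∃ π : Perm (ι → Bool), Perm.sign π = 1 ∧ ∀ t ∈ T, π t i = false := by
  have hcard := Fintype.card_filter_apply_eq i false
  rw [Fintype.card_bool] at hcard
  have htwo : 1 < 2 ^ (Fintype.card ι - 1) := Nat.one_lt_two_pow (by omega)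
  obtain ⟨π, hsign, hπ⟩ :=
    Perm.exists_sign_eq_one_mapsTo_of_card_le (s := T) (hcard ▸ hT) (hcard ▸ htwo)
  exact ⟨π, hsign, fun t ht => (mem_filter.mp (hπ t ht)).2⟩

/-- for `n ≥ 2`, every set of `2^(n-1)` vectors can be mapped by some
*even* permutation of `(Fin n → Bool)` into the vectors with first coordinate
`false`; hence a test set complete for all circuits over a gate library computing
exactly the even permutations has at least `2^(n-1) + 1` vectors. -/
theorem stmt14 {n : ℕ} (hn : 2 ≤ n) :
    (∀ T : Finset (Fin n → Bool), T.card = 2 ^ (n - 1) →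
      ∃ π : Equiv.Perm (Fin n → Bool), Equiv.Perm.sign π = 1 ∧
        ∀ t ∈ T, π t ⟨0, by omega⟩ = false) ∧
    (∀ T : Finset (Fin n → Bool),
      (∀ π : Equiv.Perm (Fin n → Bool), Equiv.Perm.sign π = 1 →
        ∀ j : Fin n, (∃ t ∈ T, π t j = true) ∧ (∃ t ∈ T, π t j = false)) →
      2 ^ (n - 1) + 1 ≤ T.card) := by
  have hcard : 2 ≤ Fintype.card (Fin n) := by simpa using hn
  refine ⟨fun T hT => ?_, fun T hcomplete => ?_⟩
  · exact exists_sign_eq_one_forall_apply_eq_false hcard _ (by simp [hT])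
  · by_contra! hT
    obtain ⟨π, hsign, hπ⟩ :=
      exists_sign_eq_one_forall_apply_eq_false hcard ⟨0, by omega⟩ (T := T) (by simp; omega)
    obtain ⟨⟨t, ht, htrue⟩, -⟩ := hcomplete π hsign ⟨0, by omega⟩
    simp [hπ t ht] at htrue
end

section
/- Under the cell fault model, any 2^n − 2^{n−k₁} + 1 distinct input vectors form a complete test set for a reversible circuit on n wires whose largest gate has arity k₁. -/
/-- under the cell fault model, any `2^n - 2^(n-k₁) + 1` distinct
input vectors form a complete test set (drive every gate through all of its input
patterns), where `k₁` bounds the gate arities. -/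
theorem stmt17 {n l k₁ : ℕ} (hk₁ : k₁ ≤ n) (S : Fin l → Finset (Fin n))
    (hk : ∀ m : Fin l, (S m).card ≤ k₁)
    (f : Fin l → ((Fin n → Bool) ≃ (Fin n → Bool)))
    (T : Finset (Fin n → Bool)) (hT : 2 ^ n - 2 ^ (n - k₁) + 1 ≤ T.card) :
    ∀ (m : Fin l) (p : {j // j ∈ S m} → Bool),
      ∃ t ∈ T, (fun s : {j // j ∈ S m} => f m t s.1) = p := by
  classical
  intro m p
  by_contra h
  push_neg at h
  -- fiber of p under x ↦ x|_{S m}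
  set F' : Finset (Fin n → Bool) :=
    Finset.univ.filter (fun x => (fun s : {j // j ∈ S m} => x s.1) = p) with hF'
  -- fiber of p under t ↦ (f m t)|_{S m}
  set F : Finset (Fin n → Bool) :=
    Finset.univ.filter (fun t => (fun s : {j // j ∈ S m} => f m t s.1) = p) with hF
  have hFcard : F.card = F'.card := by
    apply Finset.card_bij (fun t _ => f m t)
    · intro t ht
      simp only [hF, hF', Finset.mem_filter, Finset.mem_univ, true_and] at ht ⊢
      exact ht
    · intro a ha b hb hab
      exact (f m).injective hab
    · intro x hx
      refine ⟨(f m).symm x, ?_, by simp⟩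
      simp only [hF, hF', Finset.mem_filter, Finset.mem_univ, true_and] at hx ⊢
      simpa using hx
  have hF'card : F'.card = 2 ^ (n - (S m).card) := by
    have : F'.card = (Finset.univ : Finset ({j // j ∉ S m} → Bool)).card := by
      refine Finset.card_bij' (fun x _ => fun j => x j.1)
        (fun y _ => fun j => if h : j ∈ S m then p ⟨j, h⟩ else y ⟨j, h⟩)
        ?_ ?_ ?_ ?_
      · intro x hx
        simp
      · intro y hy
        simp only [hF', Finset.mem_filter, Finset.mem_univ, true_and]
        funext s
        simp [s.2]
      · intro x hx
        simp only [hF', Finset.mem_filter, Finset.mem_univ, true_and] at hx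
        funext j
        by_cases hj : j ∈ S m
        · simp only [dif_pos hj]
          exact (congrFun hx ⟨j, hj⟩).symm
        · simp [hj]
      · intro y hy
        funext j
        simp [j.2]
    rw [this, Finset.card_univ, Fintype.card_fun, Fintype.card_bool]
    congr 1
    rw [Fintype.card_subtype_compl, Fintype.card_fin]
    congr 1
    simp [Fintype.card_subtype, Finset.filter_mem_eq_inter]
  have hsub : F ⊆ Tᶜ := by
    intro t htF
    rw [Finset.mem_compl]
    intro htT
    exact h t htT ((Finset.mem_filter.mp htF).2)
  have hcompl : (Tᶜ : Finset (Fin n → Bool)).card = 2 ^ n - T.card := by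
    rw [Finset.card_compl, Fintype.card_fun, Fintype.card_bool, Fintype.card_fin]
  have hle : F.card ≤ 2 ^ n - T.card := hcompl ▸ Finset.card_le_card hsub
  have h1 : 2 ^ (n - k₁) ≤ 2 ^ (n - (S m).card) :=
    Nat.pow_le_pow_right (by norm_num) (Nat.sub_le_sub_left (hk m) n)
  have h2 : 2 ^ (n - k₁) ≤ 2 ^ n := Nat.pow_le_pow_right (by norm_num) (Nat.sub_le n k₁)
  have hTle : T.card ≤ 2 ^ n := by
    calc T.card ≤ Fintype.card (Fin n → Bool) := Finset.card_le_univ T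
    _ = 2 ^ n := by rw [Fintype.card_fun, Fintype.card_bool, Fintype.card_fin]
  omega
end

section
/- Under the cell fault model, a reversible circuit with gates of arities k_1, ..., k_l admits a complete test set of size at most (∑_{i=1}^{l} 2^{k_i}) − l + 1. -/
/-- under the cell fault model, a reversible circuit with gates of
arities `k₁, …, k_l` admits a complete test set of size at most
`(∑ 2^(k_i)) - l + 1`. -/
theorem stmt18 {n l : ℕ} (S : Fin l → Finset (Fin n))
    (f : Fin l → ((Fin n → Bool) ≃ (Fin n → Bool))) :
    ∃ T : Finset (Fin n → Bool),
      T.card ≤ (∑ m : Fin l, 2 ^ (S m).card) - l + 1 ∧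
      ∀ (m : Fin l) (p : {j // j ∈ S m} → Bool),
        ∃ t ∈ T, (fun s : {j // j ∈ S m} => f m t s.1) = p := by
  classical
  set t₀ : Fin n → Bool := fun _ => false with ht₀
  -- fault type
  let F := Σ m : Fin l, ({j // j ∈ S m} → Bool)
  -- test vector covering a fault
  let g : F → (Fin n → Bool) := fun x =>
    (f x.1).symm (fun i => if h : i ∈ S x.1 then x.2 ⟨i, h⟩ else false)
  have hg : ∀ x : F, (fun s : {j // j ∈ S x.1} => f x.1 (g x) s.1) = x.2 := by
    intro x
    funext s
    simp [g, s.2]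
  -- faults covered by t₀
  let cov : F → Prop := fun x => (fun s : {j // j ∈ S x.1} => f x.1 t₀ s.1) = x.2
  let B : Finset F := Finset.univ.filter (fun x => ¬ cov x)
  refine ⟨insert t₀ (B.image g), ?_, ?_⟩
  · have h1 : (insert t₀ (B.image g)).card ≤ B.card + 1 := by
      calc (insert t₀ (B.image g)).card ≤ (B.image g).card + 1 :=
            Finset.card_insert_le _ _
        _ ≤ B.card + 1 := by
            exact Nat.add_le_add_right (Finset.card_image_le) 1
    have hcovset : Finset.univ.filter (fun x : F => cov x) =
        Finset.univ.image (fun m : Fin l => (⟨m, fun s => f m t₀ s.1⟩ : F)) := by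
      ext x
      simp only [Finset.mem_filter, Finset.mem_univ, true_and, Finset.mem_image]
      constructor
      · rintro h
        exact ⟨x.1, by cases x; simp_all [cov]⟩
      · rintro ⟨m, rfl⟩
        rfl
    have hinj : Function.Injective (fun m : Fin l => (⟨m, fun s => f m t₀ s.1⟩ : F)) := by
      intro a b h
      simpa using congrArg Sigma.fst h
    have hcovcard : (Finset.univ.filter (fun x : F => cov x)).card = l := by
      rw [hcovset, Finset.card_image_of_injective _ hinj, Finset.card_univ, Fintype.card_fin]
    have htot : Fintype.card F = ∑ m : Fin l, 2 ^ (S m).card := by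
      simp [F, Fintype.card_fun]
    have hB : B.card = (∑ m : Fin l, 2 ^ (S m).card) - l := by
      have hBe : B = Finset.univ \ Finset.univ.filter (fun x : F => cov x) :=
        Finset.filter_not _ _
      rw [hBe, Finset.card_sdiff_of_subset (Finset.filter_subset _ _), hcovcard,
        Finset.card_univ, htot]
    rw [hB] at h1
    omega
  · intro m p
    by_cases h : cov ⟨m, p⟩
    · exact ⟨t₀, Finset.mem_insert_self _ _, h⟩
    · refine ⟨g ⟨m, p⟩, ?_, hg ⟨m, p⟩⟩
      exact Finset.mem_insert_of_mem (Finset.mem_image_of_mem g (by simp [B, h]))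
end

section
/- Under the cell fault model with all gates of equal arity k, if a set of test vectors covers a set F_C of input-pattern faults with |F_C| < l·2^k (incomplete), then there exists an input vector covering at least l − ⌊|F_C| / 2^k⌋ previously uncovered faults. -/
/-- cell fault model, all `l` gates of arity `k`.  If the faults
covered so far form the set `F_C` with `|F_C| < l·2^k`, then some input vector
covers at least `l - ⌊|F_C| / 2^k⌋` previously uncovered faults. -/
theorem stmt19 {n l k : ℕ} (hkn : k ≤ n) (S : Fin l → Finset (Fin n))
    (hS : ∀ m : Fin l, (S m).card = k)
    (f : Fin l → ((Fin n → Bool) ≃ (Fin n → Bool)))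
    (T : Finset (Fin n → Bool))
    (FC : Finset (Σ m : Fin l, ({j // j ∈ S m} → Bool)))
    (hFC : FC = Finset.univ.filter fun q : Σ m : Fin l, ({j // j ∈ S m} → Bool) =>
      ∃ t ∈ T, (fun s : {j // j ∈ S q.1} => f q.1 t s.1) = q.2)
    (hinc : FC.card < l * 2 ^ k) :
    ∃ t : Fin n → Bool,
      l - FC.card / 2 ^ k ≤
        (Finset.univ.filter fun q : Σ m : Fin l, ({j // j ∈ S m} → Bool) =>
          q ∉ FC ∧ (fun s : {j // j ∈ S q.1} => f q.1 t s.1) = q.2).card := by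
  classical
  set P : (Fin n → Bool) → (Σ m : Fin l, ({j // j ∈ S m} → Bool)) → Prop :=
    fun t q => (fun s : {j // j ∈ S q.1} => f q.1 t s.1) = q.2 with hP
  set d := FC.card / 2 ^ k with hd
  -- for each fault q, at most 2^(n-k) inputs cover it
  have hNq : ∀ q : Σ m : Fin l, ({j // j ∈ S m} → Bool), (Finset.univ.filter fun t : Fin n → Bool => P t q).card ≤ 2 ^ (n - k) := by
    intro q
    have hle : (Finset.univ.filter fun t : Fin n → Bool => P t q).card ≤
        (Finset.univ : Finset ({j // j ∈ (S q.1)ᶜ} → Bool)).card := by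
      apply Finset.card_le_card_of_injOn
        (fun t => fun j : {j // j ∈ (S q.1)ᶜ} => f q.1 t j.1)
      · intro _ _; exact Finset.mem_univ _
      · intro t₁ h₁ t₂ h₂ hφ
        simp only [Finset.mem_coe, Finset.mem_filter, hP] at h₁ h₂
        have hf : f q.1 t₁ = f q.1 t₂ := by
          funext j
          by_cases hj : j ∈ S q.1
          · have e₁ := congrFun h₁.2 ⟨j, hj⟩
            have e₂ := congrFun h₂.2 ⟨j, hj⟩
            simp only at e₁ e₂
            rw [e₁, e₂]
          · have hj' : j ∈ (S q.1)ᶜ := Finset.mem_compl.mpr hj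
            exact congrFun hφ ⟨j, hj'⟩
        exact (f q.1).injective hf
    calc (Finset.univ.filter fun t : Fin n → Bool => P t q).card
        ≤ (Finset.univ : Finset ({j // j ∈ (S q.1)ᶜ} → Bool)).card := hle
      _ = 2 ^ (n - k) := by
          rw [Finset.card_univ]
          simp [Fintype.card_fun, Finset.card_compl, hS q.1]
  -- there is an input t covering at most d faults of FC
  have key : ∃ t : Fin n → Bool, (FC.filter (P t)).card ≤ d := by
    by_contra h
    push_neg at h
    have hsum1 : 2 ^ n * (d + 1) ≤ ∑ t : Fin n → Bool, (FC.filter (P t)).card := by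
      calc 2 ^ n * (d + 1) = ∑ _t : Fin n → Bool, (d + 1) := by
            simp [Finset.sum_const, Finset.card_univ]
        _ ≤ ∑ t : Fin n → Bool, (FC.filter (P t)).card :=
            Finset.sum_le_sum fun t _ => h t
    have hswap : ∑ t : Fin n → Bool, (FC.filter (P t)).card =
        ∑ q ∈ FC, (Finset.univ.filter fun t : Fin n → Bool => P t q).card := by
      simp only [Finset.card_filter]
      rw [Finset.sum_comm]
    have hsum2 : ∑ t : Fin n → Bool, (FC.filter (P t)).card ≤ FC.card * 2 ^ (n - k) := by
      rw [hswap]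
      calc ∑ q ∈ FC, (Finset.univ.filter fun t : Fin n → Bool => P t q).card
          ≤ ∑ _q ∈ FC, 2 ^ (n - k) := Finset.sum_le_sum fun q _ => hNq q
        _ = FC.card * 2 ^ (n - k) := by simp [Finset.sum_const, Nat.smul_one_eq_cast]
    have hFClt : FC.card < 2 ^ k * (d + 1) :=
      Nat.lt_mul_div_succ FC.card (pow_pos (by norm_num) k)
    have : FC.card * 2 ^ (n - k) < 2 ^ n * (d + 1) := by
      calc FC.card * 2 ^ (n - k) < (2 ^ k * (d + 1)) * 2 ^ (n - k) :=
            Nat.mul_lt_mul_of_pos_right hFClt (pow_pos (by norm_num) _)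
        _ = 2 ^ n * (d + 1) := by
            rw [mul_comm (2 ^ k) (d + 1), mul_assoc, ← pow_add,
              Nat.add_sub_cancel' hkn, mul_comm]
    omega
  obtain ⟨t, ht⟩ := key
  refine ⟨t, ?_⟩
  -- the faults covered by t form a set of size l
  have hl : (Finset.univ.filter (P t)).card = l := by
    have himg : (Finset.univ.filter (P t)) =
        Finset.univ.image (fun m : Fin l =>
          (⟨m, fun s => f m t s.1⟩ : Σ m : Fin l, ({j // j ∈ S m} → Bool))) := by
      ext ⟨m, p⟩
      simp only [Finset.mem_filter, Finset.mem_univ, true_and, Finset.mem_image, hP]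
      constructor
      · intro hq
        exact ⟨m, by rw [hq]⟩
      · rintro ⟨m', hm'⟩
        obtain ⟨h1, h2⟩ := Sigma.ext_iff.mp hm'
        subst h1
        exact eq_of_heq h2
    rw [himg, Finset.card_image_of_injective _ (fun a b hab => congrArg Sigma.fst hab),
      Finset.card_univ, Fintype.card_fin]
  -- split covered faults into those in FC and those not in FC
  have hsplit : ((Finset.univ.filter (P t)).filter fun q => q ∈ FC).card +
      ((Finset.univ.filter (P t)).filter fun q => q ∉ FC).card
      = (Finset.univ.filter (P t)).card :=
    Finset.card_filter_add_card_filter_not _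
  have h1 : ((Finset.univ.filter (P t)).filter fun q => q ∈ FC) = FC.filter (P t) := by
    ext q; simp [hP, and_comm]
  have h2 : ((Finset.univ.filter (P t)).filter fun q => q ∉ FC) =
      (Finset.univ.filter fun q : Σ m : Fin l, ({j // j ∈ S m} → Bool) => q ∉ FC ∧ P t q) := by
    rw [Finset.filter_filter]
    apply Finset.filter_congr
    intro q _
    simp [and_comm]
  rw [h1, h2, hl] at hsplit
  have hle : l - d ≤ l - (FC.filter (P t)).card := Nat.sub_le_sub_left ht l
  simp only [hP] at hsplit hle ⊢
  omega
end
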